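/- Let c_i := σ_i − ∫_ℝ δ(y') p_i(y') ν(dy') where δ(y') = Σ_j σ_j p_j(y') as above. Then c_i = a² q_{i-1}(0) Σ_{j=1}^∞ σ_j q_{j-1}(0), and consequently {c_i}_{i=1}^∞ ∈ ℓ²(ℕ, ℝ^P) with ℓ²-norm a² |Σ_j σ_j q_{j-1}(0)| · (Σ_i q_{i-1}(0)²)^{1/2}. -/

import Mathlib

open MeasureTheory Filter Topology Finset

/-! The Gram matrix of `p₀, p₁, …` in `L²(ν)` is the identity minus the rank-one matrix
`a² q(0) q(0)ᵀ`. Pairing `p_i` with the partial sums `∑_{j<N} p_j σ_j` therefore gives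
`σ_i - a² q_i(0) ∑_{j<N} q_j(0) σ_j`, and since pairing with `p_i` is continuous on `L²`, the limit
`N → ∞` yields `∫ p_i δ = σ_i - a² q_i(0) ∑_j q_j(0) σ_j`. Thus `c_i = q_i(0) • (a² ∑_j q_j(0) σ_j)`
is a fixed vector times a square-summable scalar sequence. -/

section ScalarSmul

variable {ι E : Type*} [NormedAddCommGroup E] [NormedSpace ℝ E]

lemma sum_one_sub_rank_one_smul [DecidableEq ι] (κ : ℝ) (b : ι → ℝ) (σ : ι → E) {i : ι}
    {s : Finset ι} (hi : i ∈ s) :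
    ∑ j ∈ s, ((if i = j then 1 else 0) - κ * b i * b j) • σ j
      = σ i - (κ * b i) • ∑ j ∈ s, b j • σ j := by
  simp_rw [sub_smul, sum_sub_distrib, ite_smul, one_smul, zero_smul, sum_ite_eq, if_pos hi,
    smul_sum, smul_smul]

lemma summable_smul_of_summable_sq [CompleteSpace E] {x : ι → ℝ} {v : ι → E}
    (hx : Summable fun i => x i ^ 2) (hv : Summable fun i => ‖v i‖ ^ 2) :
    Summable fun i => x i • v i := by
  refine Summable.of_norm_bounded ((hx.add hv).div_const 2) fun i => ?_
  rw [norm_smul, Real.norm_eq_abs]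
  nlinarith [sq_nonneg (|x i| - ‖v i‖), sq_abs (x i)]

lemma memℓp_two_smul_const {x : ι → ℝ} (hx : Summable fun i => x i ^ 2) (v : E) :
    Memℓp (fun i => x i • v) 2 := by
  refine memℓp_gen ?_
  simp only [ENNReal.toReal_ofNat, Real.rpow_two, norm_smul, mul_pow, Real.norm_eq_abs, sq_abs]
  exact hx.mul_right _

lemma sqrt_tsum_norm_smul_const_sq (x : ι → ℝ) (v : E) :
    √(∑' i, ‖x i • v‖ ^ 2) = ‖v‖ * √(∑' i, x i ^ 2) := by
  simp only [norm_smul, mul_pow, Real.norm_eq_abs, sq_abs, tsum_mul_right]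
  rw [mul_comm, Real.sqrt_mul (sq_nonneg _), Real.sqrt_sq (norm_nonneg v)]

end ScalarSmul

section L2Pairing

variable {α E : Type*} [MeasurableSpace α] {μ : Measure α}
  [NormedAddCommGroup E] [NormedSpace ℝ E]

lemma integrable_smul_of_memLp_two {f : α → ℝ} {g : α → E} (hf : MemLp f 2 μ)
    (hg : MemLp g 2 μ) : Integrable (fun x => f x • g x) μ :=
  memLp_one_iff_integrable.mp (hg.smul hf)

lemma norm_integral_smul_le_sqrt_mul_sqrt {f : α → ℝ} {g : α → E} (hf : MemLp f 2 μ)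
    (hg : MemLp g 2 μ) :
    ‖∫ x, f x • g x ∂μ‖ ≤ √(∫ x, f x ^ 2 ∂μ) * √(∫ x, ‖g x‖ ^ 2 ∂μ) := by
  have h2 : ENNReal.ofReal 2 = 2 := by norm_num
  calc ‖∫ x, f x • g x ∂μ‖ ≤ ∫ x, ‖f x‖ * ‖g x‖ ∂μ := by
        simpa only [norm_smul] using norm_integral_le_integral_norm fun x => f x • g x
    _ ≤ (∫ x, ‖f x‖ ^ (2:ℝ) ∂μ) ^ (1 / (2:ℝ)) * (∫ x, ‖g x‖ ^ (2:ℝ) ∂μ) ^ (1 / (2:ℝ)) := by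
        simpa only [norm_norm] using integral_mul_norm_le_Lp_mul_Lq (f := f)
          (g := fun x => ‖g x‖) Real.HolderConjugate.two_two (h2 ▸ hf) (h2 ▸ hg.norm)
    _ = √(∫ x, f x ^ 2 ∂μ) * √(∫ x, ‖g x‖ ^ 2 ∂μ) := by
        simp [Real.sqrt_eq_rpow]

lemma tendsto_integral_smul_of_tendsto_integral_norm_sub_sq {ι : Type*} {l : Filter ι}
    {f : α → ℝ} {F : ι → α → E} {G : α → E} (hf : MemLp f 2 μ) (hF : ∀ n, MemLp (F n) 2 μ)
    (hG : MemLp G 2 μ) (hFG : Tendsto (fun n => ∫ x, ‖F n x - G x‖ ^ 2 ∂μ) l (𝓝 0)) :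
    Tendsto (fun n => ∫ x, f x • F n x ∂μ) l (𝓝 (∫ x, f x • G x ∂μ)) := by
  rw [tendsto_iff_norm_sub_tendsto_zero]
  have hbound : ∀ n, ‖∫ x, f x • F n x ∂μ - ∫ x, f x • G x ∂μ‖
      ≤ √(∫ x, f x ^ 2 ∂μ) * √(∫ x, ‖F n x - G x‖ ^ 2 ∂μ) := fun n => by
    rw [← integral_sub (integrable_smul_of_memLp_two hf (hF n))
      (integrable_smul_of_memLp_two hf hG)]
    simp_rw [← smul_sub]
    exact norm_integral_smul_le_sqrt_mul_sqrt hf ((hF n).sub hG)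
  have hlim : Tendsto (fun n => √(∫ x, f x ^ 2 ∂μ) * √(∫ x, ‖F n x - G x‖ ^ 2 ∂μ)) l (𝓝 0) := by
    simpa using ((Real.continuous_sqrt.tendsto 0).comp hFG).const_mul √(∫ x, f x ^ 2 ∂μ)
  exact squeeze_zero (fun n => norm_nonneg _) hbound hlim

lemma integral_smul_sum_smul [CompleteSpace E] {ι : Type*} {p : ι → α → ℝ} (hp : ∀ i, MemLp (p i) 2 μ)
    (σ : ι → E) (i : ι) (s : Finset ι) :
    ∫ x, p i x • ∑ j ∈ s, p j x • σ j ∂μ = ∑ j ∈ s, (∫ x, p i x * p j x ∂μ) • σ j := by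
  simp_rw [smul_sum, smul_smul]
  have hint : ∀ j, Integrable (fun x => p i x * p j x) μ := fun j =>
    (hp i).integrable_mul (hp j)
  rw [integral_finsetSum _ fun j _ => (hint j).smul_const (σ j)]
  simp_rw [integral_smul_const]

theorem integral_smul_eq_of_gram_eq_one_sub_rank_one [CompleteSpace E] {p : ℕ → α → ℝ} (hp : ∀ i, MemLp (p i) 2 μ) {κ : ℝ} {b : ℕ → ℝ}
    (hgram : ∀ i j, ∫ x, p i x * p j x ∂μ = (if i = j then 1 else 0) - κ * b i * b j)
    {σ : ℕ → E} (hbσ : Summable fun j => b j • σ j) {δ : α → E} (hδ : MemLp δ 2 μ)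
    (hlim : Tendsto (fun N => ∫ x, ‖(∑ j ∈ range N, p j x • σ j) - δ x‖ ^ 2 ∂μ) atTop (𝓝 0))
    (i : ℕ) :
    ∫ x, p i x • δ x ∂μ = σ i - (κ * b i) • ∑' j, b j • σ j := by
  have hpartial : ∀ N, MemLp (fun x => ∑ j ∈ range N, p j x • σ j) 2 μ := fun N =>
    memLp_finsetSum _ fun j _ => (memLp_top_const (σ j)).smul (hp j)
  refine tendsto_nhds_unique
    (tendsto_integral_smul_of_tendsto_integral_norm_sub_sq (hp i) hpartial hδ hlim) ?_
  refine (tendsto_const_nhds.sub (hbσ.hasSum.tendsto_sum_nat.const_smul (κ * b i))).congr' ?_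
  filter_upwards [eventually_gt_atTop i] with N hN
  simp only [integral_smul_sum_smul hp, hgram]
  exact (sum_one_sub_rank_one_smul κ b σ (mem_range.mpr hN)).symm

end L2Pairing

theorem stmt3_general (P : ℕ) (ν : Measure ℝ) (a : ℝ)
    (q : ℕ → ℝ → ℝ) (p : ℕ → ℝ → ℝ)
    (hpL2 : ∀ i, MemLp (p i) 2 ν)
    (horth : ∀ i j, ∫ x, p i x * p j x ∂ν
      = (if i = j then 1 else 0) - a ^ 2 * q i 0 * q j 0)
    (σ : ℕ → EuclideanSpace ℝ (Fin P))
    (hσ : Summable (fun i => ‖σ i‖ ^ 2))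
    (hq0 : Summable (fun i => (q i 0) ^ 2))
    (δ : ℝ → EuclideanSpace ℝ (Fin P))
    (hδL2 : MemLp δ 2 ν)
    (hδ : Filter.Tendsto
      (fun N => ∫ y, ‖(∑ j ∈ Finset.range N, p j y • σ j) - δ y‖ ^ 2 ∂ν)
      Filter.atTop (nhds 0))
    (c : ℕ → EuclideanSpace ℝ (Fin P))
    (hc : ∀ i, c i = σ i - ∫ y, p i y • δ y ∂ν) :
    (∀ i, c i = (a ^ 2 * q i 0) • ∑' j, q j 0 • σ j) ∧
    Memℓp c 2 ∧
    Real.sqrt (∑' i, ‖c i‖ ^ 2)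
      = a ^ 2 * ‖∑' j, q j 0 • σ j‖ * Real.sqrt (∑' i, (q i 0) ^ 2) := by
  set S := ∑' j, q j 0 • σ j
  have hcS : ∀ i, c i = (a ^ 2 * q i 0) • S := fun i => by
    rw [hc i, integral_smul_eq_of_gram_eq_one_sub_rank_one hpL2 horth
      (summable_smul_of_summable_sq hq0 hσ) hδL2 hδ i, sub_sub_cancel]
  have hc_eq : c = fun i => q i 0 • (a ^ 2 • S) := funext fun i => by
    rw [hcS i, mul_comm, mul_smul]
  refine ⟨hcS, hc_eq ▸ memℓp_two_smul_const hq0 _, ?_⟩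
  rw [hc_eq, sqrt_tsum_norm_smul_const_sq, norm_smul, Real.norm_of_nonneg (sq_nonneg a)]

/-- With `c_i = σ_i - ∫ δ(y') p_i(y') ν(dy')` and `δ = Σ_j σ_j p_j` (L²(ν)-sum),
one has `c_i = a² q_i(0) Σ_j σ_j q_j(0)` (0-based indexing), so
`{c_i} ∈ ℓ²(ℕ, ℝ^P)` with ℓ²-norm `a² |Σ_j σ_j q_j(0)| (Σ_i q_i(0)²)^{1/2}`. -/
theorem stmt3 (P : ℕ) (ν : Measure ℝ) (a : ℝ)
    (q : ℕ → ℝ → ℝ) (p : ℕ → ℝ → ℝ)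
    (hp : ∀ i x, p i x = x * q i x)
    (hpL2 : ∀ i, MemLp (p i) 2 ν)
    (horth : ∀ i j, ∫ x, p i x * p j x ∂ν
      = (if i = j then 1 else 0) - a ^ 2 * q i 0 * q j 0)
    (σ : ℕ → EuclideanSpace ℝ (Fin P))
    (hσ : Summable (fun i => ‖σ i‖ ^ 2))
    (hq0 : Summable (fun i => (q i 0) ^ 2))
    (δ : ℝ → EuclideanSpace ℝ (Fin P))
    (hδL2 : MemLp δ 2 ν)
    (hδ : Filter.Tendsto
      (fun N => ∫ y, ‖(∑ j ∈ Finset.range N, p j y • σ j) - δ y‖ ^ 2 ∂ν)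
      Filter.atTop (nhds 0))
    (c : ℕ → EuclideanSpace ℝ (Fin P))
    (hc : ∀ i, c i = σ i - ∫ y, p i y • δ y ∂ν) :
    (∀ i, c i = (a ^ 2 * q i 0) • ∑' j, q j 0 • σ j) ∧
    Memℓp c 2 ∧
    Real.sqrt (∑' i, ‖c i‖ ^ 2)
      = a ^ 2 * ‖∑' j, q j 0 • σ j‖ * Real.sqrt (∑' i, (q i 0) ^ 2) :=
  stmt3_general P ν a q p hpL2 horth σ hσ hq0 δ hδL2 hδ c hc
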